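/- Let G be an n-vertex simple graph that is ℓ-saturated. Then for every pair of nonadjacent vertices u, v of G, deg(u) + deg(v) ≤ n − 1 + ℓ. -/

import Mathlib

/-!
Bondy–Chvátal rotation. Suppose `deg u + deg v ≥ n + ℓ` and let `F` be a linear forest of `G`
with `ℓ` edges lying on no hamiltonian cycle of `G`. By saturation `F` lies on a hamiltonian
cycle of `G + uv`, which therefore uses `uv`; deleting it leaves a hamiltonian path
`v = x₀, …, x_{n-1} = u` of `G` through `F`. Among the `n - 1` indices `i`, more than `ℓ`
satisfy both `u ~ xᵢ` and `v ~ xᵢ₊₁`, so for one of them `xᵢxᵢ₊₁ ∉ F`, and then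
`v, …, xᵢ, u, x_{n-2}, …, xᵢ₊₁, v` is a hamiltonian cycle of `G` through `F`.
-/

open SimpleGraph

/-- A linear forest: an acyclic graph with maximum degree at most 2. -/
def SimpleGraph.IsLinearForest {V : Type*} (F : SimpleGraph V) : Prop :=
  F.IsAcyclic ∧ ∀ v a b c : V, F.Adj v a → F.Adj v b → F.Adj v c → a = b ∨ a = c ∨ b = c

/-- A graph is `ℓ`-hamiltonian if every linear forest with `ℓ` edges contained in it
extends to a hamiltonian cycle. -/
def SimpleGraph.IsLHamiltonian {V : Type*} [DecidableEq V] (G : SimpleGraph V) (ℓ : ℕ) : Prop :=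
  ∀ F : SimpleGraph V, F ≤ G → F.IsLinearForest → F.edgeSet.ncard = ℓ →
    ∃ (v : V) (c : G.Walk v v), c.IsHamiltonianCycle ∧ ∀ e ∈ F.edgeSet, e ∈ c.edges

/-- The graph `H_{n,d,ℓ}`: a complete graph on `A = {0, …, n-d+ℓ-1}` together with `d-ℓ`
further vertices, each adjacent to the set `B = {0, …, d-1} ⊆ A`. -/
def Hgraph (n d ℓ : ℕ) : SimpleGraph (Fin n) where
  Adj u v := u ≠ v ∧ ((u.val < n - d + ℓ ∧ v.val < n - d + ℓ) ∨
    (u.val < d ∧ n - d + ℓ ≤ v.val) ∨ (v.val < d ∧ n - d + ℓ ≤ u.val))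
  symm := ⟨by intro u v h; exact ⟨h.1.symm, by tauto⟩⟩
  loopless := ⟨by intro v h; exact h.1 rfl⟩

/-- The graph `H'_{n,d,ℓ}`: a complete graph on `{0, …, n-d+ℓ-1}` and a complete graph on
`{n-d-1, …, n-1}` sharing `ℓ+1` vertices. -/
def H'graph (n d ℓ : ℕ) : SimpleGraph (Fin n) where
  Adj u v := u ≠ v ∧ ((u.val < n - d + ℓ ∧ v.val < n - d + ℓ) ∨
    (n - d - 1 ≤ u.val ∧ n - d - 1 ≤ v.val))
  symm := ⟨by intro u v h; exact ⟨h.1.symm, by tauto⟩⟩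
  loopless := ⟨by intro v h; exact h.1 rfl⟩

/-- `h_r(n,d,ℓ) = C(n-d+ℓ, r) + (d-ℓ) C(d, r-1)`. -/
def hrfun (n d r ℓ : ℕ) : ℕ := Nat.choose (n - d + ℓ) r + (d - ℓ) * Nat.choose d (r - 1)

/-- `h(n,d,ℓ) = C(n-d+ℓ, 2) + (d-ℓ) d`. -/
def hfun (n d ℓ : ℕ) : ℕ := Nat.choose (n - d + ℓ) 2 + (d - ℓ) * d

/-- The number of `r`-cliques of `G`. -/
noncomputable def cliqueCount {V : Type*} (G : SimpleGraph V) (r : ℕ) : ℕ :=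
  {s : Finset V | G.IsNClique r s}.ncard

/-- `G` is `ℓ`-saturated: not `ℓ`-hamiltonian, but adding any edge makes it `ℓ`-hamiltonian. -/
def SimpleGraph.IsLSaturated {V : Type*} [DecidableEq V] (G : SimpleGraph V) (ℓ : ℕ) : Prop :=
  ¬ G.IsLHamiltonian ℓ ∧
    ∀ u v : V, u ≠ v → ¬ G.Adj u v → (G ⊔ SimpleGraph.edge u v).IsLHamiltonian ℓ

namespace SimpleGraph

variable {V : Type*} {G : SimpleGraph V}

open Finset

theorem card_filter_adj_eq_degree [Fintype V] [DecidableRel G.Adj] {w : V} {s : Finset ℕ}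
    {f : ℕ → V} (hf : Set.InjOn f s) (hs : ∀ x, G.Adj w x → ∃ i ∈ s, f i = x) :
    #{i ∈ s | G.Adj w (f i)} = G.degree w := by
  rw [← card_neighborFinset_eq_degree]
  refine card_nbij f (fun i hi => ?_) (hf.mono (filter_subset _ s)) fun x hx => ?_
  · simpa using (mem_filter.mp hi).2
  · obtain ⟨i, hi, rfl⟩ := hs x ((mem_neighborFinset _ _ _).mp hx)
    exact ⟨i, by simpa [hi] using hx, rfl⟩

namespace Walk

theorem IsTrail.injOn_mk_getVert {u v : V} {p : G.Walk u v} (hp : p.IsTrail) :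
    Set.InjOn (fun i => s(p.getVert i, p.getVert (i + 1))) {i | i < p.length} := by
  intro i hi j hj hij
  have hi' : i < p.edges.length := by simpa using hi
  have hj' : j < p.edges.length := by simpa using hj
  simp only at hij
  rw [← getElem_edges hi', ← getElem_edges hj'] at hij
  exact hp.edges_nodup.getElem_inj_iff.mp hij

theorem IsCycle.eq_snd_or_eq_penultimate_of_mem_edges {u v : V} {c : G.Walk u u}
    (hc : c.IsCycle) (h : s(u, v) ∈ c.edges) : v = c.snd ∨ v = c.penultimate := by
  rw [← c.cons_tail_eq hc.not_nil, edges_cons, List.mem_cons] at h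
  rcases h with h | h
  · exact Or.inl (Sym2.congr_right.mp h)
  · right
    rw [hc.isPath_tail.eq_penultimate_of_mem_edges h, penultimate, getVert_tail]
    have := length_tail_add_one hc.not_nil
    have := hc.three_le_length
    congr 1
    omega

variable [DecidableEq V]

theorem IsHamiltonian.transfer {u v : V} {p : G.Walk u v} (hp : p.IsHamiltonian)
    {H : SimpleGraph V} (hpH : ∀ e ∈ p.edges, e ∈ H.edgeSet) :
    (p.transfer H hpH).IsHamiltonian :=
  fun a => by rw [support_transfer]; exact hp a

theorem IsHamiltonianCycle.transfer {u : V} {c : G.Walk u u} (hc : c.IsHamiltonianCycle)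
    {H : SimpleGraph V} (hcH : ∀ e ∈ c.edges, e ∈ H.edgeSet) :
    (c.transfer H hcH).IsHamiltonianCycle := by
  have := hc.finite
  cases nonempty_fintype V
  rw [isHamiltonianCycle_iff_isCycle_and_length_eq] at hc ⊢
  exact ⟨hc.1.transfer hcH, by rw [length_transfer, hc.2]⟩

theorem IsHamiltonianCycle.reverse {u : V} {c : G.Walk u u} (hc : c.IsHamiltonianCycle) :
    c.reverse.IsHamiltonianCycle := by
  have := hc.finite
  cases nonempty_fintype V
  rw [isHamiltonianCycle_iff_isCycle_and_length_eq] at hc ⊢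
  exact ⟨hc.1.reverse, by rw [length_reverse, hc.2]⟩

theorem IsHamiltonianCycle.exists_isHamiltonian_of_mem_edges {u v w : V} {c : G.Walk w w}
    (hc : c.IsHamiltonianCycle) (h : s(u, v) ∈ c.edges) :
    ∃ p : G.Walk v u, p.IsHamiltonian ∧ c.edges.Perm (s(u, v) :: p.edges) := by
  suffices key : ∀ c' : G.Walk u u, c'.IsHamiltonianCycle → v = c'.snd →
      ∃ p : G.Walk v u, p.IsHamiltonian ∧ c'.edges.Perm (s(u, v) :: p.edges) by
    have hu : u ∈ c.support := c.fst_mem_support_of_mem_edges h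
    have hperm : (c.rotate u hu).edges.Perm c.edges := (c.rotate_edges u hu).perm
    have hc' := hc.rotate hu
    rcases hc'.isCycle.eq_snd_or_eq_penultimate_of_mem_edges (hperm.mem_iff.mpr h) with hv | hv
    · obtain ⟨p, hp, hp'⟩ := key _ hc' hv
      exact ⟨p, hp, hperm.symm.trans hp'⟩
    · obtain ⟨p, hp, hp'⟩ := key _ hc'.reverse (by rwa [snd_reverse])
      refine ⟨p, hp, ?_⟩
      rw [edges_reverse] at hp'
      exact hperm.symm.trans ((List.reverse_perm _).symm.trans hp')
  rintro c' hc' rfl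
  refine ⟨c'.tail, hc'.isHamiltonian_tail, ?_⟩
  conv_lhs => rw [← c'.cons_tail_eq hc'.not_nil]
  rw [edges_cons]

theorem IsHamiltonian.isHamiltonianCycle_cons {a b : V} {p : G.Walk a b} (hp : p.IsHamiltonian)
    (h : G.Adj b a) (hlen : 1 < p.length) : (cons h p).IsHamiltonianCycle := by
  refine ⟨(cons_isCycle_iff p h).mpr ⟨hp.isPath, fun hba => ?_⟩,
    by simpa [IsHamiltonian] using hp⟩
  have hsnd : b = p.getVert 1 := hp.isPath.eq_snd_of_mem_edges (Sym2.eq_swap ▸ hba)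
  have := hp.isPath.getVert_injOn (show 1 ≤ p.length by omega)
    (show p.length ≤ p.length from le_rfl) (hsnd.symm.trans p.getVert_length.symm)
  omega

theorem IsHamiltonian.isHamiltonianCycle_cons_append_cons_reverse {u v x y : V}
    {q : G.Walk v x} {r : G.Walk y u} {hxy : G.Adj x y}
    (hp : (q.append (cons hxy r)).IsHamiltonian)
    (hxu : G.Adj x u) (hyv : G.Adj y v) (hvu : ¬ G.Adj v u) :
    (cons hyv (q.append (cons hxu r.reverse))).IsHamiltonianCycle := by
  refine IsHamiltonian.isHamiltonianCycle_cons (fun w => ?_) hyv ?_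
  · rw [← hp w]
    refine List.Perm.count_eq ?_ w
    simpa [support_append] using (List.reverse_perm r.support).append_left q.support
  · have hq : q.length ≠ 0 := fun h => hvu (q.eq_of_length_eq_zero h ▸ hxu)
    simp only [length_append, length_cons, length_reverse]
    omega

variable [Fintype V] [DecidableRel G.Adj]

theorem IsHamiltonian.exists_crossing_notMem {u v : V} {p : G.Walk v u} (hp : p.IsHamiltonian)
    (F : Set (Sym2 V)) (hdeg : Fintype.card V + F.ncard ≤ G.degree u + G.degree v) :
    ∃ i < p.length, G.Adj u (p.getVert i) ∧ G.Adj v (p.getVert (i + 1)) ∧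
      s(p.getVert i, p.getVert (i + 1)) ∉ F := by
  set S := {i ∈ range p.length | G.Adj u (p.getVert i)}
  set T := {i ∈ range p.length | G.Adj v (p.getVert (i + 1))}
  have hS : #S = G.degree u := by
    refine card_filter_adj_eq_degree (hp.isPath.getVert_injOn.mono fun i hi => ?_) fun x hx => ?_
    · simp only [coe_range, Set.mem_Iio] at hi
      exact hi.le
    · obtain ⟨i, rfl, hi⟩ := mem_support_iff_exists_getVert.mp (hp.mem_support x)
      refine ⟨i, mem_range.mpr (lt_of_le_of_ne hi ?_), rfl⟩
      rintro rfl
      exact G.irrefl (p.getVert_length ▸ hx)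
  have hT : #T = G.degree v := by
    refine card_filter_adj_eq_degree (f := fun i => p.getVert (i + 1))
      (fun i hi j hj h => ?_) fun x hx => ?_
    · simp only [coe_range, Set.mem_Iio] at hi hj
      have := hp.isPath.getVert_injOn (show i + 1 ≤ p.length by omega)
        (show j + 1 ≤ p.length by omega) h
      omega
    · obtain ⟨i, rfl, hi⟩ := mem_support_iff_exists_getVert.mp (hp.mem_support x)
      have hi0 : i ≠ 0 := by
        rintro rfl
        exact G.irrefl (p.getVert_zero ▸ hx)
      exact ⟨i - 1, mem_range.mpr (by omega), by rw [Nat.sub_add_cancel (by omega)]⟩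
  have hlen : p.length + 1 = Fintype.card V := p.length_support ▸ hp.length_support
  have hST : F.ncard < #(S ∩ T) := by
    have := card_union_add_card_inter S T
    have : #(S ∪ T) ≤ #(range p.length) :=
      card_le_card (union_subset (filter_subset _ _) (filter_subset _ _))
    rw [card_range] at this
    omega
  have hinj := hp.isPath.isTrail.injOn_mk_getVert.mono (s₁ := ↑(S ∩ T)) fun i hi => by
    simp only [S, coe_inter, coe_filter, mem_range, Set.mem_inter_iff, Set.mem_ofPred_eq] at hi
    exact hi.1.1
  obtain ⟨e, he, heF⟩ := Set.exists_mem_notMem_of_ncard_lt_ncard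
    (s := F) (t := ((S ∩ T).image fun i => s(p.getVert i, p.getVert (i + 1)) : Set (Sym2 V)))
    (by rwa [Set.ncard_coe_finset, card_image_of_injOn hinj])
  obtain ⟨i, hi, rfl⟩ := mem_image.mp he
  simp only [S, T, mem_inter, mem_filter, mem_range] at hi
  exact ⟨i, hi.1.1, hi.1.2, hi.2.2, heF⟩

theorem IsHamiltonian.exists_isHamiltonianCycle_of_degree_add {u v : V} {p : G.Walk v u}
    (hp : p.IsHamiltonian) (huv : ¬ G.Adj u v) {F : Set (Sym2 V)} (hF : ∀ e ∈ F, e ∈ p.edges)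
    (hdeg : Fintype.card V + F.ncard ≤ G.degree u + G.degree v) :
    ∃ (w : V) (c : G.Walk w w), c.IsHamiltonianCycle ∧ ∀ e ∈ F, e ∈ c.edges := by
  obtain ⟨i, hi, hu, hv, hiF⟩ := hp.exists_crossing_notMem F hdeg
  have hnil : ¬ (p.drop i).Nil := by
    rw [nil_drop_iff]
    omega
  have hsnd : (p.drop i).snd = p.getVert (i + 1) := p.drop_getVert i 1
  have hdecomp : (p.take i).append (cons ((p.drop i).adj_snd hnil) (p.drop i).tail) = p := by
    rw [cons_tail_eq _ hnil, append_take_drop_eq]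
  rw [← hsnd] at hv hiF
  refine ⟨_, _, (hdecomp ▸ hp).isHamiltonianCycle_cons_append_cons_reverse hu.symm hv.symm
    (fun h => huv h.symm), fun e he => ?_⟩
  have hep := hF e he
  rw [← hdecomp] at hep
  have hne : e ≠ s(p.getVert i, (p.drop i).snd) := fun h => hiF (h ▸ he)
  simp only [edges_cons, edges_append, edges_reverse, List.mem_cons, List.mem_append,
    List.mem_reverse] at hep ⊢
  tauto

end Walk

open Walk

theorem exists_isHamiltonianCycle_of_sup_edge [DecidableEq V] [Fintype V] [DecidableRel G.Adj]
    {u v : V} (hne : u ≠ v) (huv : ¬ G.Adj u v) {F : Set (Sym2 V)} (hFG : F ⊆ G.edgeSet)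
    (hdeg : Fintype.card V + F.ncard ≤ G.degree u + G.degree v) {w : V}
    {c : (G ⊔ edge u v).Walk w w} (hc : c.IsHamiltonianCycle) (hFc : ∀ e ∈ F, e ∈ c.edges) :
    ∃ (x : V) (c' : G.Walk x x), c'.IsHamiltonianCycle ∧ ∀ e ∈ F, e ∈ c'.edges := by
  have hG : ∀ e ∈ c.edges, e ≠ s(u, v) → e ∈ G.edgeSet := by
    intro e he heuv
    have := c.edges_subset_edgeSet he
    rw [edgeSet_sup, edgeSet_edge_of_ne hne] at this
    exact this.resolve_right heuv
  by_cases h : s(u, v) ∈ c.edges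
  · obtain ⟨p, hp, hperm⟩ := hc.exists_isHamiltonian_of_mem_edges h
    have hp_uv : s(u, v) ∉ p.edges :=
      (List.nodup_cons.mp (hperm.nodup_iff.mp hc.edges_nodup)).1
    have hpG : ∀ e ∈ p.edges, e ∈ G.edgeSet := fun e he =>
      hG e (hperm.mem_iff.mpr (List.mem_cons_of_mem _ he)) (ne_of_mem_of_not_mem he hp_uv)
    refine (hp.transfer hpG).exists_isHamiltonianCycle_of_degree_add huv (fun e he => ?_) hdeg
    rw [edges_transfer]
    exact (List.mem_cons.mp (hperm.mem_iff.mp (hFc e he))).resolve_left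
      fun heuv => huv (by simpa [heuv] using hFG he)
  · exact ⟨w, c.transfer G fun e he => hG e he (ne_of_mem_of_not_mem he h), hc.transfer _,
      by simpa [edges_transfer] using hFc⟩

end SimpleGraph

/-- **Bondy–Chvátal.** In an `ℓ`-saturated `n`-vertex graph, every pair of nonadjacent
vertices has degree sum at most `n - 1 + ℓ`. -/
theorem lSaturated_degree_sum {n ℓ : ℕ} (G : SimpleGraph (Fin n)) [DecidableRel G.Adj]
    (hsat : G.IsLSaturated ℓ) :
    ∀ u v : Fin n, u ≠ v → ¬ G.Adj u v → G.degree u + G.degree v ≤ n - 1 + ℓ := by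
  intro u v hne huv
  by_contra! hdeg
  obtain ⟨hnot, hsat⟩ := hsat
  simp only [IsLHamiltonian, not_forall, not_exists, not_and] at hnot
  obtain ⟨F, hFG, hFlin, hFcard, hnoc⟩ := hnot
  obtain ⟨w, c, hc, hFc⟩ := hsat u v hne huv F (hFG.trans le_sup_left) hFlin hFcard
  obtain ⟨x, c', hc', hFc'⟩ := exists_isHamiltonianCycle_of_sup_edge hne huv
    (edgeSet_mono hFG) (by rw [Fintype.card_fin, hFcard]; omega) hc hFc
  obtain ⟨e, he, hec⟩ := hnoc x c' hc'
  exact hec (hFc' e he)
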